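/- Let K be a field. The Krull dimension of the polynomial ring K[X₁,…,Xₙ] is exactly n, i.e., every sequence of n+1 elements is singular (in Lombardi's sense) but the sequence X₁,…,Xₙ is not singular. -/

import Mathlib

/-!
Any `n + 1` polynomials in `n` variables are algebraically dependent, as the transcendence degree
of `K[X₁, …, Xₙ]` is `n`. A nonzero relation `Q(x) = 0` is, up to a nonzero scalar, a nested
expression in `x`: factor the largest power of `X₁` out of `Q`, split off the part free of `X₁`,
and recurse on that part. Conversely, a nested expression in `X₁, …, Xₙ` never vanishes: `X₁` is
not a zero divisor, and setting `X₁ = 0` turns the inner factor into a nested expression in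
`X₂, …, Xₙ`.
-/

def nestedExpr {R : Type*} [CommRing R] : List (R × R × ℕ) → R
  | [] => 1
  | (x, a, m) :: t => x ^ m * (nestedExpr t + a * x)

open MvPolynomial

lemma nestedExpr_map {R S : Type*} [CommRing R] [CommRing S] (f : R →+* S) :
    ∀ L : List (R × R × ℕ),
      nestedExpr (L.map fun p => (f p.1, f p.2.1, p.2.2)) = f (nestedExpr L)
  | [] => by simp [nestedExpr]
  | (x, a, m) :: t => by simp [nestedExpr, nestedExpr_map f t]

lemma nestedExpr_cons_ne_zero {R S : Type*} [CommRing R] [NoZeroDivisors R] [CommRing S]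
    (f : R →+* S) {x : R} (a : R) (m : ℕ) (t : List (R × R × ℕ)) (hx : x ≠ 0) (hfx : f x = 0)
    (ht : nestedExpr (t.map fun p => (f p.1, f p.2.1, p.2.2)) ≠ 0) :
    nestedExpr ((x, a, m) :: t) ≠ 0 := by
  refine mul_ne_zero (pow_ne_zero m hx) fun h => ht ?_
  simpa [nestedExpr_map, hfx] using congrArg f h

lemma nestedExpr_ofFn_X_ne_zero {R : Type*} [CommRing R] [IsDomain R] :
    ∀ (n : ℕ) (a : Fin n → MvPolynomial (Fin n) R) (m : Fin n → ℕ),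
      nestedExpr (List.ofFn fun i => (X i, a i, m i)) ≠ 0
  | 0, _, _ => by simp [nestedExpr]
  | n + 1, a, m => by
    let f : MvPolynomial (Fin (n + 1)) R →ₐ[R] MvPolynomial (Fin n) R := aeval (Fin.cons 0 X)
    rw [List.ofFn_succ]
    refine nestedExpr_cons_ne_zero f.toRingHom _ _ _ (X_ne_zero 0) (by simp [f]) ?_
    simpa [f, List.map_ofFn, Function.comp_def] using
      nestedExpr_ofFn_X_ne_zero n (fun i => f (a i.succ)) (fun i => m i.succ)

lemma Polynomial.exists_eq_X_pow_mul_coeff_zero_ne_zero {R : Type*} [CommRing R]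
    {p : Polynomial R} (hp : p ≠ 0) :
    ∃ (k : ℕ) (q : Polynomial R), p = X ^ k * q ∧ q.coeff 0 ≠ 0 := by
  obtain ⟨q, hpq, hq⟩ := p.exists_eq_pow_rootMultiplicity_mul_and_not_dvd hp 0
  rw [map_zero, sub_zero] at hpq hq
  exact ⟨_, q, hpq, mt X_dvd_iff.2 hq⟩

lemma MvPolynomial.aeval_eq_eval₂_finSuccEquiv {K R : Type*} [CommSemiring K] [CommSemiring R]
    [Algebra K R] {ℓ : ℕ} (x : Fin (ℓ + 1) → R) (Q : MvPolynomial (Fin (ℓ + 1)) K) :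
    aeval x Q = (finSuccEquiv K ℓ Q).eval₂ (aeval (Fin.tail x)).toRingHom (x 0) := by
  induction Q using MvPolynomial.induction_on with
  | C a => simp [finSuccEquiv_apply]
  | add p q hp hq => simp [Polynomial.eval₂_add, hp, hq]
  | mul_X p i hp =>
    rw [map_mul, map_mul, Polynomial.eval₂_mul, hp]
    cases i using Fin.cases <;> simp [finSuccEquiv_X_zero, finSuccEquiv_X_succ, Fin.tail]

lemma exists_nestedExpr_eq_smul_aeval {K R : Type*} [Field K] [CommRing R] [Algebra K R] :
    ∀ {ℓ : ℕ} (x : Fin ℓ → R) {Q : MvPolynomial (Fin ℓ) K}, Q ≠ 0 →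
      ∃ (a : Fin ℓ → R) (m : Fin ℓ → ℕ) (c : K), c ≠ 0 ∧
        nestedExpr (List.ofFn fun i => (x i, a i, m i)) = c • aeval x Q
  | 0, x, Q, hQ => by
    obtain ⟨q, rfl⟩ : ∃ q, Q = C q := ⟨_, eq_C_of_isEmpty Q⟩
    have hq : q ≠ 0 := by simpa using hQ
    refine ⟨finZeroElim, finZeroElim, q⁻¹, inv_ne_zero hq, ?_⟩
    rw [aeval_C, Algebra.smul_def, ← map_mul, inv_mul_cancel₀ hq]
    simp [nestedExpr]
  | ℓ + 1, x, Q, hQ => by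
    obtain ⟨k, P, hQP, hP₀⟩ := Polynomial.exists_eq_X_pow_mul_coeff_zero_ne_zero
      ((finSuccEquiv K ℓ).injective.ne_iff' (map_zero _) |>.2 hQ)
    obtain ⟨a, m, c, hc, ha⟩ := exists_nestedExpr_eq_smul_aeval (Fin.tail x) hP₀
    set f := (aeval (Fin.tail x) : MvPolynomial (Fin ℓ) K →ₐ[K] R).toRingHom
    refine ⟨Fin.cons (c • P.divX.eval₂ f (x 0)) a, Fin.cons k m, c, hc, ?_⟩
    have hPQ : aeval x Q = x 0 ^ k * (x 0 * P.divX.eval₂ f (x 0) + f (P.coeff 0)) := by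
      rw [aeval_eq_eval₂_finSuccEquiv, hQP]
      conv_lhs => rw [← P.X_mul_divX_add]
      simp only [Polynomial.eval₂_mul, Polynomial.eval₂_add, Polynomial.eval₂_X_pow,
        Polynomial.eval₂_X, Polynomial.eval₂_C, f]
    rw [List.ofFn_succ, hPQ]
    simp only [nestedExpr, Fin.cons_zero, Fin.cons_succ]
    rw [show (fun i => (x i.succ, a i, m i)) = fun i => (Fin.tail x i, a i, m i) from rfl, ha]
    simp only [f, Algebra.smul_def, AlgHom.toRingHom_eq_coe, RingHom.coe_coe]
    ring

lemma exists_nestedExpr_eq_zero_of_trdeg_lt {K R : Type*} [Field K] [CommRing R] [Algebra K R]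
    {ℓ : ℕ} (hR : Algebra.trdeg K R < ℓ) (x : Fin ℓ → R) :
    ∃ (a : Fin ℓ → R) (m : Fin ℓ → ℕ), nestedExpr (List.ofFn fun i => (x i, a i, m i)) = 0 := by
  have hx : ¬ AlgebraicIndependent K x := fun hx =>
    hR.not_ge (by simpa using hx.lift_cardinalMk_le_trdeg)
  obtain ⟨Q, hQx, hQ⟩ : ∃ Q, aeval x Q = 0 ∧ Q ≠ 0 := by
    simpa [algebraicIndependent_iff] using hx
  obtain ⟨a, m, c, -, h⟩ := exists_nestedExpr_eq_smul_aeval x hQ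
  exact ⟨a, m, by rw [h, hQx, smul_zero]⟩

theorem krullDim_mvPolynomial {K : Type*} [Field K] (n : ℕ) :
    (∀ x : Fin (n + 1) → MvPolynomial (Fin n) K,
      ∃ a : Fin (n + 1) → MvPolynomial (Fin n) K, ∃ m : Fin (n + 1) → ℕ,
        nestedExpr (List.ofFn (fun i => (x i, a i, m i))) = 0) ∧
    ¬ (∃ a : Fin n → MvPolynomial (Fin n) K, ∃ m : Fin n → ℕ,
        nestedExpr (List.ofFn (fun i => (MvPolynomial.X i, a i, m i))) = 0) := by
  constructor
  · exact exists_nestedExpr_eq_zero_of_trdeg_lt (K := K) (by simp)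
  · rintro ⟨a, m, h⟩
    exact nestedExpr_ofFn_X_ne_zero n a m h
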